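/- For the augmented matrix Ã = [[A, b₁],[0, 0]] of size (n+1)×(n+1), where A is n×n and b₁ ∈ ℝⁿ, the top n entries of e^{Ã} applied to the vector (v, 1) equal e^{A}v + φ₁(A)b₁, where φ₁(A) = ∑_{k≥0} A^k/(k+1)!. -/

import Mathlib

/-!
Powers of `Ã = [[A, b],[0, 0]]` stay block upper triangular with vanishing lower row:
`Ã^(k+1) = [[A^(k+1), A^k b],[0, 0]]`. Summing the exponential series blockwise, the top-left
block gives `e^A` and the top-right block gives `∑ A^k b / (k+1)! = φ₁(A) b`, so
`e^Ã = [[e^A, φ₁(A) b],[0, 1]]`, and applying this to `(v, 1)` gives the claim.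
-/

open Matrix

open scoped Nat

noncomputable def phi1 (𝕂 : Type*) {𝔸 : Type*} [Field 𝕂] [Ring 𝔸] [Algebra 𝕂 𝔸]
    [TopologicalSpace 𝔸] (a : 𝔸) : 𝔸 :=
  ∑' k : ℕ, ((k + 1)! : 𝕂)⁻¹ • a ^ k

theorem hasSum_phi1 {𝕂 𝔸 : Type*} [RCLike 𝕂] [NormedRing 𝔸] [NormedAlgebra 𝕂 𝔸]
    [CompleteSpace 𝔸] (a : 𝔸) :
    HasSum (fun k : ℕ => ((k + 1)! : 𝕂)⁻¹ • a ^ k) (phi1 𝕂 a) := by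
  refine Summable.hasSum (.of_norm_bounded (NormedSpace.norm_expSeries_summable' (𝕂 := 𝕂) a)
    fun k => ?_)
  rw [norm_smul, norm_smul]
  gcongr
  simp only [norm_inv, RCLike.norm_natCast]
  gcongr
  exact k.le_succ

theorem HasSum.matrix_fromBlocks {ι l m n o α : Type*} [AddCommMonoid α] [TopologicalSpace α]
    {fA : ι → Matrix n l α} {fB : ι → Matrix n m α} {fC : ι → Matrix o l α}
    {fD : ι → Matrix o m α} {a : Matrix n l α} {b : Matrix n m α} {c : Matrix o l α}
    {d : Matrix o m α} (hA : HasSum fA a) (hB : HasSum fB b) (hC : HasSum fC c)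
    (hD : HasSum fD d) :
    HasSum (fun i => fromBlocks (fA i) (fB i) (fC i) (fD i)) (fromBlocks a b c d) := by
  refine Pi.hasSum.mpr fun i => Pi.hasSum.mpr fun j => ?_
  rcases i with i | i <;> rcases j with j | j
  · exact Pi.hasSum.mp (Pi.hasSum.mp hA i) j
  · exact Pi.hasSum.mp (Pi.hasSum.mp hB i) j
  · exact Pi.hasSum.mp (Pi.hasSum.mp hC i) j
  · exact Pi.hasSum.mp (Pi.hasSum.mp hD i) j

namespace Matrix

variable {l m : Type*} [Fintype l] [DecidableEq l] [Fintype m] [DecidableEq m]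

theorem fromBlocks_zero_zero_pow_succ {α : Type*} [Semiring α] (A : Matrix l l α)
    (B : Matrix l m α) (k : ℕ) :
    fromBlocks A B (0 : Matrix m l α) (0 : Matrix m m α) ^ (k + 1) =
      fromBlocks (A ^ (k + 1)) (A ^ k * B) 0 0 := by
  induction k with
  | zero => simp
  | succ k ih =>
    rw [pow_succ, ih, fromBlocks_multiply]
    simp [pow_succ, Matrix.mul_assoc]

variable {𝕂 : Type*} [RCLike 𝕂]

theorem hasSum_expSeries (A : Matrix l l 𝕂) :
    HasSum (fun k : ℕ => (k ! : 𝕂)⁻¹ • A ^ k) (NormedSpace.exp A) := by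
  open scoped Norms.Operator in exact NormedSpace.exp_series_hasSum_exp' A

theorem hasSum_phi1 (A : Matrix l l 𝕂) :
    HasSum (fun k : ℕ => ((k + 1)! : 𝕂)⁻¹ • A ^ k) (phi1 𝕂 A) := by
  open scoped Norms.Operator in exact _root_.hasSum_phi1 A

theorem exp_fromBlocks_zero_zero (A : Matrix l l 𝕂) (B : Matrix l m 𝕂) :
    NormedSpace.exp (fromBlocks A B (0 : Matrix m l 𝕂) (0 : Matrix m m 𝕂)) =
      fromBlocks (NormedSpace.exp A) (phi1 𝕂 A * B) 0 1 := by
  set M := fromBlocks A B (0 : Matrix m l 𝕂) (0 : Matrix m m 𝕂)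
  have hA : HasSum (fun k : ℕ => ((k + 1)! : 𝕂)⁻¹ • A ^ (k + 1)) (NormedSpace.exp A - 1) := by
    simpa using (hasSum_nat_add_iff' 1).mpr (hasSum_expSeries A)
  have hB : HasSum (fun k : ℕ => ((k + 1)! : 𝕂)⁻¹ • A ^ k * B) (phi1 𝕂 A * B) :=
    (hasSum_phi1 A).map (AddMonoidHom.mk' (· * B) fun X Y => Matrix.add_mul X Y B)
      (continuous_id.matrix_mul continuous_const)
  have hM : HasSum (fun k : ℕ => ((k + 1)! : 𝕂)⁻¹ • M ^ (k + 1))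
      (fromBlocks (NormedSpace.exp A - 1) (phi1 𝕂 A * B) 0 0) := by
    simp_rw [M, fromBlocks_zero_zero_pow_succ, fromBlocks_smul, smul_zero, ← Matrix.smul_mul]
    exact hA.matrix_fromBlocks hB hasSum_zero hasSum_zero
  have hexp := (hasSum_nat_add_iff (f := fun k : ℕ => (k ! : 𝕂)⁻¹ • M ^ k) 1).mp hM
  rw [(hasSum_expSeries M).unique hexp, Finset.sum_range_one, Nat.factorial_zero, Nat.cast_one,
    inv_one, pow_zero, one_smul, ← fromBlocks_one, fromBlocks_add]
  simp

end Matrix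

/-- The augmented-matrix trick: the top block of e^{Ã}(v,1) is e^A v + φ₁(A) b₁,
where Ã = [[A, b₁],[0,0]] and φ₁(A) = ∑_{k≥0} A^k/(k+1)!. -/
theorem augmented_matrix_phi1 {n : ℕ} (A : Matrix (Fin n) (Fin n) ℝ)
    (b₁ v : Fin n → ℝ) :
    ∀ i : Fin n,
      (NormedSpace.exp (Matrix.fromBlocks A (Matrix.of fun i (_ : Unit) => b₁ i)
          (0 : Matrix Unit (Fin n) ℝ) (0 : Matrix Unit Unit ℝ)) *ᵥ
        Sum.elim v (fun _ => 1)) (Sum.inl i) =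
      (NormedSpace.exp A *ᵥ v) i +
        ((∑' k : ℕ, ((Nat.factorial (k + 1) : ℝ))⁻¹ • A ^ k) *ᵥ b₁) i := by
  intro i
  rw [exp_fromBlocks_zero_zero, fromBlocks_mulVec, ← mulVec_mulVec]
  simp [phi1, mulVec, dotProduct, mul_apply]
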